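/- Let Z, Z' be as above and suppose {F_1,…,F_p} is a good set of minimal separators of the point P_i of multiplicity m_i. Then for every t ∈ ℕ², dim_k (I_{Z'}/I_Z)_t = #{ i ∈ {1,…,p} : deg F_i ⪯ t }, where ⪯ is the componentwise partial order on ℕ². -/

import Mathlib

/-!
Formalization of statements from "Separators of fat points in ℙⁿ×ℙᵐ"
(Guardo–Van Tuyl).  The bigraded coordinate ring `R = k[x₀,…,xₙ,y₀,…,y_m]` of
`ℙⁿ×ℙᵐ` is modelled as `MvPolynomial (Fin (n+1) ⊕ Fin (m+1)) k`, where the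
variable `X (Sum.inl i)` is `xᵢ` (degree `(1,0)`) and `X (Sum.inr j)` is `yⱼ`
(degree `(0,1)`); bihomogeneity is weighted homogeneity for the weight `biWeight`.
-/

open MvPolynomial

noncomputable section

/-- The ℕ²-graded coordinate ring `R` of `ℙⁿ×ℙᵐ`. -/
abbrev BiRing (k : Type) [Field k] (n m : ℕ) : Type :=
  MvPolynomial (Fin (n + 1) ⊕ Fin (m + 1)) k

/-- The weight function on the variables giving the ℕ²-grading:
`deg xᵢ = (1,0)` and `deg yⱼ = (0,1)`. -/
def biWeight (n m : ℕ) : Fin (n + 1) ⊕ Fin (m + 1) → ℕ × ℕ :=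
  Sum.elim (fun _ => (1, 0)) (fun _ => (0, 1))

variable {k : Type} [Field k] {n m : ℕ}

/-- `F` is bihomogeneous of degree `d ∈ ℕ²`. -/
def BihomOfDeg (F : BiRing k n m) (d : ℕ × ℕ) : Prop :=
  IsWeightedHomogeneous (biWeight n m) F d

/-- `I` is the defining (prime) ideal of a point of `ℙⁿ×ℙᵐ`: it is generated by
`n` linear forms of degree `(1,0)` and `m` linear forms of degree `(0,1)` which
are linearly independent (so that they cut out a single point of `ℙⁿ×ℙᵐ`). -/
def IsPointIdeal (I : Ideal (BiRing k n m)) : Prop :=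
  ∃ (L : Fin n → BiRing k n m) (L' : Fin m → BiRing k n m),
    (∀ a, BihomOfDeg (L a) (1, 0)) ∧ (∀ b, BihomOfDeg (L' b) (0, 1)) ∧
    LinearIndependent k (Sum.elim L L') ∧
    I = Ideal.span (Set.range L ∪ Set.range L')

/-- The defining ideal `I_Z = I_{P₁}^{m₁} ∩ ⋯ ∩ I_{P_s}^{m_s}` of the fat point
scheme `Z = m₁P₁ + ⋯ + m_sP_s`. -/
def fatIdeal {s : ℕ} (P : Fin s → Ideal (BiRing k n m)) (mult : Fin s → ℕ) :
    Ideal (BiRing k n m) :=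
  ⨅ j, P j ^ mult j

/-- `F` is a separator of the point `Pᵢ` of multiplicity `mᵢ`, where `IZ = I_Z`
and `IZ' = I_{Z'}`: a bihomogeneous form lying in `I_{Z'} \ I_Z`
(equivalently `F ∈ I_{Pᵢ}^{mᵢ-1} \ I_{Pᵢ}^{mᵢ}` and `F ∈ I_{Pⱼ}^{mⱼ}` for `j ≠ i`). -/
def IsSeparator (IZ IZ' : Ideal (BiRing k n m)) (F : BiRing k n m) : Prop :=
  (∃ d, BihomOfDeg F d) ∧ F ∈ IZ' ∧ F ∉ IZ

/-- `F₁,…,F_p` is a set of minimal separators of `Pᵢ` of multiplicity `mᵢ`: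
each `Fⱼ` is a (bihomogeneous) separator, their residue classes generate the
ideal `I_{Z'}/I_Z` of `R/I_Z` (equivalently `I_Z + (F₁,…,F_p) = I_{Z'}`), and no
fewer than `p` bihomogeneous forms have classes generating `I_{Z'}/I_Z`. -/
def IsMinSepSet (IZ IZ' : Ideal (BiRing k n m)) {p : ℕ}
    (F : Fin p → BiRing k n m) : Prop :=
  (∀ j, IsSeparator IZ IZ' (F j)) ∧
  IZ ⊔ Ideal.span (Set.range F) = IZ' ∧
  ∀ q : ℕ, q < p → ∀ G : Fin q → BiRing k n m,
    (∀ j, ∃ d, BihomOfDeg (G j) d) → IZ ⊔ Ideal.span (Set.range G) ≠ IZ'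

/-- A family `F₁,…,F_p` of forms with `deg Fⱼ = d j` is a *good* set (of minimal
separators) if for every `t ∈ ℕ²` the classes of `x₀^{t₁-dⱼ₁} y₀^{t₂-dⱼ₂} Fⱼ`
(over those `j` with `d j ⪯ t` componentwise) are linearly independent in
`(I_{Z'}/I_Z)_t`; i.e. any `k`-linear combination lying in `I_Z` has all its
coefficients equal to zero. -/
def IsGoodSepSet {p : ℕ} (IZ : Ideal (BiRing k n m)) (F : Fin p → BiRing k n m)
    (d : Fin p → ℕ × ℕ) : Prop :=
  ∀ t : ℕ × ℕ, ∀ c : Fin p → k,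
    (∑ j ∈ Finset.univ.filter (fun j => (d j).1 ≤ t.1 ∧ (d j).2 ≤ t.2),
        c j • (X (Sum.inl 0) ^ (t.1 - (d j).1) * X (Sum.inr 0) ^ (t.2 - (d j).2) * F j))
      ∈ IZ →
    ∀ j : Fin p, (d j).1 ≤ t.1 → (d j).2 ≤ t.2 → c j = 0

/-!
By minimality `I_Z + (F₁,…,F_p) = I_{Z'}`, so modulo `I_Z` a form of degree `t` in `I_{Z'}` is a
sum of products `A_j F_j` with `A_j` bihomogeneous of degree `t - deg F_j`. The forms `x₀`, `y₀`
do not vanish at `P_i`, because `P_i I_{Z'} ⊆ I_Z` and they are nonzero-divisors modulo `I_Z`;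
the linear forms cutting out `P_i` then make every `x_a` a multiple of `x₀` and every `y_b` a
multiple of `y₀` modulo `I_{P_i}`, so `A_j ≡ c x₀^{a} y₀^{b} (mod I_{P_i})`, and multiplying by
`F_j ∈ I_{Z'}` gives `A_j F_j ≡ c x₀^{a} y₀^{b} F_j (mod I_Z)`. Hence the classes of the shifted
separators span `(I_{Z'}/I_Z)_t`, and goodness says exactly that they are linearly independent.
-/

theorem exists_sub_smul_mem_of_linearIndependent {K V : Type*} [Field K] [AddCommGroup V]
    [Module K V] {N : Submodule K V} {r : ℕ} {L : Fin r → V} (hL : LinearIndependent K L)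
    (hLN : ∀ a, L a ∈ N) {f : Fin (r + 1) → V} (hLf : ∀ a, L a ∈ Submodule.span K (Set.range f))
    {j₀ : Fin (r + 1)} (hj₀ : f j₀ ∉ N) (j : Fin (r + 1)) :
    ∃ c : K, f j - c • f j₀ ∈ N := by
  have hspanN : Submodule.span K (Set.range L) ≤ N :=
    Submodule.span_le.2 (Set.range_subset_iff.2 hLN)
  have hcons : LinearIndependent K (Fin.cons (f j₀) L : Fin (r + 1) → V) :=
    hL.finCons fun h => hj₀ (hspanN h)
  have hle : Submodule.span K (Set.range (Fin.cons (f j₀) L : Fin (r + 1) → V)) ≤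
      Submodule.span K (Set.range f) :=
    Submodule.span_le.2 <| Set.range_subset_iff.2 <|
      Fin.cases (Submodule.subset_span ⟨j₀, rfl⟩) hLf
  have : FiniteDimensional K (Submodule.span K (Set.range f)) :=
    FiniteDimensional.span_of_finite K (Set.finite_range f)
  have heq := Submodule.eq_of_le_of_finrank_le hle <| by
    rw [finrank_span_eq_card hcons]
    simpa [Set.finrank] using finrank_range_le_card (R := K) f
  have hfj : f j ∈ Submodule.span K (insert (f j₀) (Set.range L)) := by
    rw [← Fin.range_cons, heq]
    exact Submodule.subset_span ⟨j, rfl⟩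
  obtain ⟨c, z, hz, hfz⟩ := Submodule.mem_span_insert.1 hfj
  exact ⟨c, by rw [hfz, add_sub_cancel_left]; exact hspanN hz⟩

theorem mul_mem_span_singleton_mul {K A : Type*} [CommSemiring K] [CommSemiring A] [Algebra K A]
    {a b x y : A} (ha : a ∈ K ∙ x) (hb : b ∈ K ∙ y) : a * b ∈ K ∙ (x * y) := by
  obtain ⟨c, rfl⟩ := Submodule.mem_span_singleton.1 ha
  obtain ⟨c', rfl⟩ := Submodule.mem_span_singleton.1 hb
  rw [smul_mul_smul_comm]
  exact Submodule.smul_mem _ _ (Submodule.mem_span_singleton_self _)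

theorem Ideal.Quotient.mkₐ_mem_span_singleton_iff {K A : Type*} [CommRing K] [CommRing A]
    [Algebra K A] {I : Ideal A} {a b : A} :
    mkₐ K I a ∈ K ∙ mkₐ K I b ↔ ∃ c : K, a - c • b ∈ I := by
  rw [Submodule.mem_span_singleton]
  refine exists_congr fun c => ?_
  rw [← map_smul, eq_comm, mkₐ_eq_mk, Ideal.Quotient.eq]

theorem Ideal.IsHomogeneous.pow {ι σ A : Type*} [CommSemiring A] [DecidableEq ι] [AddMonoid ι]
    [SetLike σ A] [AddSubmonoidClass σ A] {𝒜 : ι → σ} [GradedRing 𝒜] {I : Ideal A}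
    (hI : I.IsHomogeneous 𝒜) (e : ℕ) : (I ^ e).IsHomogeneous 𝒜 := by
  induction e with
  | zero => simpa using Ideal.IsHomogeneous.top 𝒜
  | succ e ih => simpa only [pow_succ] using ih.mul hI

theorem Ideal.IsHomogeneous.exists_eq_add_sum_of_mem_sup_span {ι σ A κ : Type*} [CommSemiring A]
    [DecidableEq ι] [AddCommMonoid ι] [PartialOrder ι] [CanonicallyOrderedAdd ι] [Sub ι]
    [OrderedSub ι] [AddLeftReflectLE ι] [SetLike σ A] [AddSubmonoidClass σ A] {𝒜 : ι → σ}
    [GradedRing 𝒜] [DecidableLE ι] [Fintype κ] {I : Ideal A} (hI : I.IsHomogeneous 𝒜) {F : κ → A}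
    {d : κ → ι} (hF : ∀ j, F j ∈ 𝒜 (d j)) {t : ι} {H : A} (hHt : H ∈ 𝒜 t)
    (hH : H ∈ I ⊔ Ideal.span (Set.range F)) :
    ∃ g ∈ I, ∃ a : κ → A, (∀ j, a j ∈ 𝒜 (t - d j)) ∧
      H = g + ∑ j ∈ Finset.univ.filter (fun j => d j ≤ t), a j * F j := by
  obtain ⟨g, hg, _, hr, rfl⟩ := Submodule.mem_sup.1 hH
  obtain ⟨b, rfl⟩ := Ideal.mem_span_range_iff_exists_fun.1 hr
  refine ⟨GradedRing.proj 𝒜 t g, hI t hg, fun j => GradedRing.proj 𝒜 (t - d j) (b j),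
    fun j => SetLike.coe_mem _, ?_⟩
  rw [← DirectSum.decompose_of_mem_same 𝒜 hHt, ← GradedRing.proj_apply, map_add, map_sum,
    Finset.sum_filter]
  congr 1
  refine Finset.sum_congr rfl fun j _ => ?_
  exact DirectSum.coe_decompose_mul_of_right_mem 𝒜 t (hF j)

attribute [local instance] MvPolynomial.weightedGradedAlgebra

theorem Finsupp.degree_eq_biWeight_fst_add_snd (α : Fin (n + 1) ⊕ Fin (m + 1) →₀ ℕ) :
    α.degree = (weight (biWeight n m) α).1 + (weight (biWeight n m) α).2 := by
  induction α using Finsupp.induction_linear with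
  | zero => simp
  | add α β hα hβ => simp only [map_add, Prod.fst_add, Prod.snd_add, hα, hβ]; ring
  | single v r => rcases v with a | b <;> simp [biWeight, Finsupp.weight_single]

theorem weightedHomogeneousSubmodule_biWeight_le_span_X {e : ℕ × ℕ} (he : e.1 + e.2 = 1) :
    weightedHomogeneousSubmodule k (biWeight n m) e ≤
      Submodule.span k (X '' {v | biWeight n m v = e}) := by
  rw [weightedHomogeneousSubmodule_eq_finsupp_supported, AddMonoidAlgebra.supported_eq_span_single,
    Submodule.span_le]
  rintro _ ⟨α, hα : Finsupp.weight _ α = e, rfl⟩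
  obtain ⟨v, rfl⟩ : α ∈ Set.range (Finsupp.single · 1) := by
    rw [Finsupp.range_single_one, Set.mem_ofPred_eq, Finsupp.degree_eq_biWeight_fst_add_snd, hα,
      he]
  exact Submodule.subset_span ⟨v, by simpa [Finsupp.weight_single] using hα, rfl⟩

def x₀y₀Pow (u : ℕ × ℕ) : BiRing k n m := X (Sum.inl 0) ^ u.1 * X (Sum.inr 0) ^ u.2

theorem x₀y₀Pow_zero : (x₀y₀Pow 0 : BiRing k n m) = 1 := by simp [x₀y₀Pow]

theorem x₀y₀Pow_add (u u' : ℕ × ℕ) :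
    (x₀y₀Pow (u + u') : BiRing k n m) = x₀y₀Pow u * x₀y₀Pow u' := by
  simp only [x₀y₀Pow, Prod.fst_add, Prod.snd_add, pow_add]
  ring

theorem x₀y₀Pow_nsmul (e : ℕ) (u : ℕ × ℕ) :
    (x₀y₀Pow (e • u) : BiRing k n m) = x₀y₀Pow u ^ e := by
  simp only [x₀y₀Pow, Prod.smul_fst, Prod.smul_snd, smul_eq_mul, mul_pow, ← pow_mul, mul_comm e]

theorem isWeightedHomogeneous_x₀y₀Pow (u : ℕ × ℕ) :
    IsWeightedHomogeneous (biWeight n m) (x₀y₀Pow u : BiRing k n m) u := by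
  have h : IsWeightedHomogeneous (biWeight n m) (x₀y₀Pow u : BiRing k n m) _ :=
    ((isWeightedHomogeneous_X k (biWeight n m) (Sum.inl 0)).pow u.1).mul
      ((isWeightedHomogeneous_X k (biWeight n m) (Sum.inr 0)).pow u.2)
  convert h using 1
  ext <;> simp [biWeight]

theorem mem_span_x₀y₀Pow_of_isWeightedHomogeneous {S : Type*} [CommRing S] [Algebra k S]
    (f : BiRing k n m →ₐ[k] S) (hf : ∀ v, f (X v) ∈ k ∙ f (x₀y₀Pow (biWeight n m v)))
    {A : BiRing k n m} {u : ℕ × ℕ} (hA : IsWeightedHomogeneous (biWeight n m) A u) :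
    f A ∈ k ∙ f (x₀y₀Pow u) := by
  have hmonomial (α : Fin (n + 1) ⊕ Fin (m + 1) →₀ ℕ) :
      f (monomial α 1) ∈ k ∙ f (x₀y₀Pow (Finsupp.weight (biWeight n m) α)) := by
    induction α using Finsupp.induction_linear with
    | zero => simp [x₀y₀Pow_zero]
    | add α β hα hβ =>
      rw [← one_mul (1 : k), ← monomial_mul, map_add, x₀y₀Pow_add, map_mul, map_mul]
      exact mul_mem_span_singleton_mul hα hβ
    | single v e =>
      obtain ⟨c, hc⟩ := Submodule.mem_span_singleton.1 (hf v)
      rw [← X_pow_eq_monomial, map_pow, ← hc, Finsupp.weight_single, x₀y₀Pow_nsmul, map_pow,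
        smul_pow]
      exact Submodule.smul_mem _ _ (Submodule.mem_span_singleton_self _)
  have hspan : weightedHomogeneousSubmodule k (biWeight n m) u ≤
      (k ∙ f (x₀y₀Pow u)).comap f.toLinearMap := by
    rw [weightedHomogeneousSubmodule_eq_finsupp_supported,
      AddMonoidAlgebra.supported_eq_span_single, Submodule.span_le]
    rintro _ ⟨α, hα : Finsupp.weight _ α = u, rfl⟩
    exact hα ▸ hmonomial α
  exact hspan hA

theorem IsPointIdeal.isHomogeneous {I : Ideal (BiRing k n m)} (hI : IsPointIdeal I) :
    I.IsHomogeneous (weightedHomogeneousSubmodule k (biWeight n m)) := by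
  obtain ⟨L, L', hL, hL', -, rfl⟩ := hI
  refine Ideal.homogeneous_span _ _ ?_
  rintro _ (⟨a, rfl⟩ | ⟨b, rfl⟩)
  exacts [⟨(1, 0), hL a⟩, ⟨(0, 1), hL' b⟩]

theorem fatIdeal_isHomogeneous {s : ℕ} {P : Fin s → Ideal (BiRing k n m)}
    (hP : ∀ j, IsPointIdeal (P j)) (mult : Fin s → ℕ) :
    (fatIdeal P mult).IsHomogeneous (weightedHomogeneousSubmodule k (biWeight n m)) :=
  Ideal.IsHomogeneous.iInf fun j => (hP j).isHomogeneous.pow (mult j)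

theorem mul_fatIdeal_update_le {s : ℕ} (P : Fin s → Ideal (BiRing k n m)) (mult : Fin s → ℕ)
    (i : Fin s) : P i * fatIdeal P (Function.update mult i (mult i - 1)) ≤ fatIdeal P mult := by
  refine le_iInf fun j => ?_
  obtain rfl | hj := eq_or_ne j i
  · calc P j * fatIdeal P (Function.update mult j (mult j - 1))
        ≤ P j * P j ^ (mult j - 1) := by
          refine Ideal.mul_mono_right ((iInf_le _ j).trans ?_)
          rw [Function.update_self]
      _ = P j ^ (mult j - 1 + 1) := (pow_succ' _ _).symm
      _ ≤ P j ^ mult j := Ideal.pow_le_pow_right (by omega)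
  · refine Ideal.mul_le_right.trans ((iInf_le _ j).trans ?_)
    rw [Function.update_of_ne hj]

theorem IsPointIdeal.mkₐ_X_mem_span_x₀y₀Pow {I : Ideal (BiRing k n m)} (hI : IsPointIdeal I)
    (hx : X (Sum.inl 0) ∉ I) (hy : X (Sum.inr 0) ∉ I) (v : Fin (n + 1) ⊕ Fin (m + 1)) :
    Ideal.Quotient.mkₐ k I (X v) ∈ k ∙ Ideal.Quotient.mkₐ k I (x₀y₀Pow (biWeight n m v)) := by
  obtain ⟨L, L', hL, hL', hind, rfl⟩ := hI
  rw [Ideal.Quotient.mkₐ_mem_span_singleton_iff]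
  set N := (Ideal.span (Set.range L ∪ Set.range L')).restrictScalars k
  rcases v with a | b
  · have hLX (a : Fin n) : L a ∈ Submodule.span k (Set.range fun a => X (Sum.inl a)) :=
      Submodule.span_mono (by rintro _ ⟨v | v, hv, rfl⟩ <;> simp_all [biWeight])
        (weightedHomogeneousSubmodule_biWeight_le_span_X rfl (hL a))
    simp only [biWeight, Sum.elim_inl, x₀y₀Pow, pow_one, pow_zero, mul_one]
    exact exists_sub_smul_mem_of_linearIndependent (N := N) (hind.comp Sum.inl Sum.inl_injective)
      (fun a => Ideal.subset_span (Or.inl ⟨a, rfl⟩)) hLX hx a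
  · have hLX (b : Fin m) : L' b ∈ Submodule.span k (Set.range fun b => X (Sum.inr b)) :=
      Submodule.span_mono (by rintro _ ⟨v | v, hv, rfl⟩ <;> simp_all [biWeight])
        (weightedHomogeneousSubmodule_biWeight_le_span_X rfl (hL' b))
    simp only [biWeight, Sum.elim_inr, x₀y₀Pow, pow_one, pow_zero, one_mul]
    exact exists_sub_smul_mem_of_linearIndependent (N := N) (hind.comp Sum.inr Sum.inr_injective)
      (fun b => Ideal.subset_span (Or.inr ⟨b, rfl⟩)) hLX hy b

theorem IsPointIdeal.mkₐ_mul_mem_span_x₀y₀Pow_mul {P I J : Ideal (BiRing k n m)}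
    (hP : IsPointIdeal P) (hx : X (Sum.inl 0) ∉ P) (hy : X (Sum.inr 0) ∉ P) (hPJ : P * J ≤ I)
    {F : BiRing k n m} (hF : F ∈ J) {a : BiRing k n m} {u : ℕ × ℕ}
    (ha : IsWeightedHomogeneous (biWeight n m) a u) :
    Ideal.Quotient.mkₐ k I (a * F) ∈ k ∙ Ideal.Quotient.mkₐ k I (x₀y₀Pow u * F) := by
  obtain ⟨c, hc⟩ := Ideal.Quotient.mkₐ_mem_span_singleton_iff.1 <|
    mem_span_x₀y₀Pow_of_isWeightedHomogeneous _ (hP.mkₐ_X_mem_span_x₀y₀Pow hx hy) ha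
  refine Ideal.Quotient.mkₐ_mem_span_singleton_iff.2 ⟨c, ?_⟩
  rw [← smul_mul_assoc, ← sub_mul]
  exact hPJ (Ideal.mul_mem_mul hc hF)

theorem map_mkₐ_inf_eq_span_x₀y₀Pow_mul {P IZ IZ' : Ideal (BiRing k n m)} (hP : IsPointIdeal P)
    (hPIZ : P * IZ' ≤ IZ) (hIZ : IZ.IsHomogeneous (weightedHomogeneousSubmodule k (biWeight n m)))
    (hx : ∀ g, X (Sum.inl 0) * g ∈ IZ → g ∈ IZ) (hy : ∀ g, X (Sum.inr 0) * g ∈ IZ → g ∈ IZ)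
    {p : ℕ} {F : Fin p → BiRing k n m} {d : Fin p → ℕ × ℕ}
    (hdeg : ∀ j, IsWeightedHomogeneous (biWeight n m) (F j) (d j))
    (hsep : ∀ j, F j ∈ IZ' ∧ F j ∉ IZ) (hsup : IZ ⊔ Ideal.span (Set.range F) = IZ') (t : ℕ × ℕ) :
    Submodule.map (Ideal.Quotient.mkₐ k IZ).toLinearMap
        (weightedHomogeneousSubmodule k (biWeight n m) t ⊓ IZ'.restrictScalars k) =
      Submodule.span k ((fun j => Ideal.Quotient.mkₐ k IZ (x₀y₀Pow (t - d j) * F j)) ''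
        ↑(Finset.univ.filter fun j => d j ≤ t)) := by
  refine le_antisymm ?_ (Submodule.span_le.2 ?_)
  · rintro _ ⟨H, ⟨hHt, hH⟩, rfl⟩
    obtain ⟨g, hg, a, ha, rfl⟩ := hIZ.exists_eq_add_sum_of_mem_sup_span hdeg hHt (hsup ▸ hH)
    rw [map_add, map_sum, AlgHom.toLinearMap_apply, Ideal.Quotient.mkₐ_eq_mk,
      Ideal.Quotient.eq_zero_iff_mem.2 hg, zero_add]
    refine Submodule.sum_mem _ fun j hj => ?_
    obtain ⟨hFIZ', hFIZ⟩ := hsep j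
    refine Submodule.span_mono (Set.singleton_subset_iff.2 (Set.mem_image_of_mem _ hj)) <|
      hP.mkₐ_mul_mem_span_x₀y₀Pow_mul ?_ ?_ hPIZ hFIZ' (ha j)
    · exact fun hx₀ => hFIZ (hx _ (hPIZ (Ideal.mul_mem_mul hx₀ hFIZ')))
    · exact fun hy₀ => hFIZ (hy _ (hPIZ (Ideal.mul_mem_mul hy₀ hFIZ')))
  · rintro _ ⟨j, hj, rfl⟩
    refine ⟨x₀y₀Pow (t - d j) * F j, ⟨?_, IZ'.mul_mem_left _ (hsep j).1⟩, rfl⟩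
    have hdt : t - d j + d j = t := tsub_add_cancel_of_le (Finset.mem_filter.1 hj).2
    have hmul := (isWeightedHomogeneous_x₀y₀Pow (t - d j)).mul (hdeg j)
    rwa [hdt] at hmul

theorem stmt6_general {s : ℕ}
    (P : Fin s → Ideal (BiRing k n m)) (mult : Fin s → ℕ)
    (hP : ∀ j, IsPointIdeal (P j))
    (i : Fin s)
    (IZ IZ' : Ideal (BiRing k n m))
    (hIZ : IZ = fatIdeal P mult)
    (hIZ' : IZ' = fatIdeal P (Function.update mult i (mult i - 1)))
    (hx : ∀ g : BiRing k n m, X (Sum.inl 0) * g ∈ IZ → g ∈ IZ)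
    (hy : ∀ g : BiRing k n m, X (Sum.inr 0) * g ∈ IZ → g ∈ IZ)
    {p : ℕ} (F : Fin p → BiRing k n m) (d : Fin p → ℕ × ℕ)
    (hdeg : ∀ j, BihomOfDeg (F j) (d j))
    (hmin : IsMinSepSet IZ IZ' F)
    (hgood : IsGoodSepSet IZ F d) :
    ∀ t : ℕ × ℕ,
      Module.finrank k
        (Submodule.map (Ideal.Quotient.mkₐ k IZ).toLinearMap
          (weightedHomogeneousSubmodule k (biWeight n m) t ⊓
            Submodule.restrictScalars k IZ')) =
      (Finset.univ.filter (fun j => (d j).1 ≤ t.1 ∧ (d j).2 ≤ t.2)).card := by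
  intro t
  set T := Finset.univ.filter fun j => (d j).1 ≤ t.1 ∧ (d j).2 ≤ t.2
  set v := fun j => Ideal.Quotient.mkₐ k IZ (x₀y₀Pow (t - d j) * F j)
  have hPIZ : P i * IZ' ≤ IZ := hIZ ▸ hIZ' ▸ mul_fatIdeal_update_le P mult i
  have hIZhom : IZ.IsHomogeneous (weightedHomogeneousSubmodule k (biWeight n m)) :=
    hIZ ▸ fatIdeal_isHomogeneous hP mult
  have hspan := map_mkₐ_inf_eq_span_x₀y₀Pow_mul (hP i) hPIZ hIZhom hx hy hdeg
    (fun j => (hmin.1 j).2) hmin.2.1 t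
  have hind : LinearIndepOn k v T := by
    refine linearIndepOn_finset_iff.2 fun c hc j hj => ?_
    refine hgood t c ?_ j (Finset.mem_filter.1 hj).2.1 (Finset.mem_filter.1 hj).2.2
    have hsum : Ideal.Quotient.mkₐ k IZ (∑ j ∈ T, c j • (x₀y₀Pow (t - d j) * F j)) = 0 := by
      simpa only [map_sum, map_smul] using hc
    -- `x₀y₀Pow (t - d j)` unfolds to the monomial `x₀^(t₁ - d_j₁) * y₀^(t₂ - d_j₂)` of `hgood`
    exact Ideal.Quotient.eq_zero_iff_mem.1 hsum
  rw [hspan, show Finset.univ.filter (fun j => d j ≤ t) = T from rfl, Set.image_eq_range,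
    finrank_span_eq_card hind]
  simp only [Finset.coe_sort_coe, Fintype.card_coe]

/-- Theorem 4.3(ii): if `{F₁,…,F_p}` is a good set of minimal
separators with degrees `d j`, then for every `t ∈ ℕ²`,
`dim_k (I_{Z'}/I_Z)_t = #{j : d j ⪯ t}`.  The graded piece `(I_{Z'}/I_Z)_t` is
realized as the image in `R/I_Z` of the space of bihomogeneous elements of
degree `t` of `I_{Z'}`. -/
theorem stmt6 [IsAlgClosed k] [CharZero k] {s : ℕ}
    (P : Fin s → Ideal (BiRing k n m)) (mult : Fin s → ℕ)
    (hP : ∀ j, IsPointIdeal (P j)) (hinj : Function.Injective P)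
    (hmult : ∀ j, 1 ≤ mult j) (i : Fin s)
    (IZ IZ' : Ideal (BiRing k n m))
    (hIZ : IZ = fatIdeal P mult)
    (hIZ' : IZ' = fatIdeal P (Function.update mult i (mult i - 1)))
    (hx : ∀ g : BiRing k n m, X (Sum.inl 0) * g ∈ IZ → g ∈ IZ)
    (hy : ∀ g : BiRing k n m, X (Sum.inr 0) * g ∈ IZ → g ∈ IZ)
    (hx' : ∀ g : BiRing k n m, X (Sum.inl 0) * g ∈ IZ' → g ∈ IZ')
    (hy' : ∀ g : BiRing k n m, X (Sum.inr 0) * g ∈ IZ' → g ∈ IZ')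
    {p : ℕ} (F : Fin p → BiRing k n m) (d : Fin p → ℕ × ℕ)
    (hdeg : ∀ j, BihomOfDeg (F j) (d j))
    (hmin : IsMinSepSet IZ IZ' F)
    (hgood : IsGoodSepSet IZ F d) :
    ∀ t : ℕ × ℕ,
      Module.finrank k
        (Submodule.map (Ideal.Quotient.mkₐ k IZ).toLinearMap
          (weightedHomogeneousSubmodule k (biWeight n m) t ⊓
            Submodule.restrictScalars k IZ')) =
      (Finset.univ.filter (fun j => (d j).1 ≤ t.1 ∧ (d j).2 ≤ t.2)).card :=
  stmt6_general P mult hP i IZ IZ' hIZ hIZ' hx hy F d hdeg hmin hgood
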